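/- Let A be a finite-dimensional local symmetric algebra over an algebraically closed field k of characteristic 3 with dim_k A = 9 and Z(A) ≅ Z(B) where B = k⟨X,Y⟩/⟨X³,Y³,XY+YX⟩. Then Z(A) ∩ J(A) is an ideal of A. -/

import Mathlib

open Module FreeAlgebra

noncomputable section

def IsSymmAlg (k : Type) [Field k] (C : Type) [Ring C] [Algebra k C] : Prop :=
  ∃ s : C →ₗ[k] k, (∀ x y : C, s (x * y) = s (y * x)) ∧
    ∀ I : Ideal C, (∀ x ∈ I, s x = 0) → I = ⊥

def radSub (k : Type) [Field k] (C : Type) [Ring C] [Algebra k C] : Submodule k C :=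
  Submodule.span k {a : C | ¬ IsUnit a}

def socSub (k : Type) [Field k] (C : Type) [Ring C] [Algebra k C] : Submodule k C where
  carrier := {a : C | ∀ b : C, ¬ IsUnit b → b * a = 0 ∧ a * b = 0}
  add_mem' := by
    intro a b ha hb c hc
    obtain ⟨h1, h2⟩ := ha c hc
    obtain ⟨h3, h4⟩ := hb c hc
    constructor
    · rw [mul_add, h1, h3, add_zero]
    · rw [add_mul, h2, h4, add_zero]
  zero_mem' := by
    intro b hb
    constructor <;> simp
  smul_mem' := by
    intro r a ha c hc
    obtain ⟨h1, h2⟩ := ha c hc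
    constructor
    · rw [Algebra.mul_smul_comm, h1, smul_zero]
    · rw [Algebra.smul_mul_assoc, h2, smul_zero]

/-- The relations X³ = 0, Y³ = 0, XY + YX = 0 in the free algebra on two
generators. -/
def Brel (k : Type) [Field k] :
    FreeAlgebra k (Fin 2) → FreeAlgebra k (Fin 2) → Prop := fun a b =>
  b = 0 ∧ (a = ι k (0 : Fin 2) ^ 3 ∨ a = ι k (1 : Fin 2) ^ 3 ∨
    a = ι k (0 : Fin 2) * ι k (1 : Fin 2) + ι k (1 : Fin 2) * ι k (0 : Fin 2))

/-- The quantum complete intersection B = k⟨X,Y⟩/⟨X³, Y³, XY+YX⟩. -/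
abbrev Balg (k : Type) [Field k] := RingQuot (Brel k)

/-- The image of X in B. -/
def xB (k : Type) [Field k] : Balg k := RingQuot.mkAlgHom k (Brel k) (ι k 0)

/-- The image of Y in B. -/
def yB (k : Type) [Field k] : Balg k := RingQuot.mkAlgHom k (Brel k) (ι k 1)

/-!
In a symmetric algebra with symmetrizing form `s` one has `s ((x * c - c * x) * y) = 0` whenever
`x` and `y` commute. Hence if `A = Z(A) + k a + k b + k c` with `a * b = b * a`, the commutator
`a * c - c * a` is orthogonal to all of `A` and vanishes; so does `b * c - c * b`, and `A` is
commutative.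

The monomials `1, x², y², x²y, xy², x²y²` of `B` are central, and they are linearly independent,
as one sees in the action of `B` on its monomial basis. So `dim Z(A) = dim Z(B) ≥ 6` and
`A / Z(A)` has dimension at most `3`. For `a ∈ A` and a central non-unit `z`, either `a` and `a z`
are independent modulo `Z(A)`, and a third element `c` completes them as above, making `A`
commutative; or `μ a + ν a z ∈ Z(A)` with `(μ, ν) ≠ 0`, where `μ + ν z` is a central unit as soon
as `μ ≠ 0`. In every case `a z ∈ Z(A)`.
-/

open Submodule

section LinearAlgebra

variable {k V : Type*} [Field k] [AddCommGroup V] [Module k V] [FiniteDimensional k V]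

theorem exists_sup_span_singleton_eq_top {W : Submodule k V} (hW : finrank k (V ⧸ W) ≤ 1) :
    ∃ c : V, W ⊔ span k {c} = ⊤ := by
  obtain ⟨v, hv⟩ := finrank_le_one_iff.mp hW
  obtain ⟨c, rfl⟩ := W.mkQ_surjective v
  refine ⟨c, (map_mkQ_eq_top W _).mp (eq_top_iff.mpr fun w _ => ?_)⟩
  obtain ⟨t, rfl⟩ := hv w
  rw [map_span, Set.image_singleton]
  exact smul_mem _ t (subset_span rfl)

theorem exists_smul_add_smul_mem_or_exists_sup_span_eq_top {W : Submodule k V}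
    (hW : finrank k V ≤ finrank k W + 3) (a b : V) :
    (∃ μ ν : k, (μ ≠ 0 ∨ ν ≠ 0) ∧ μ • a + ν • b ∈ W) ∨ ∃ c : V, W ⊔ span k {a, b, c} = ⊤ := by
  by_cases hdep : ∃ μ ν : k, (μ ≠ 0 ∨ ν ≠ 0) ∧ μ • a + ν • b ∈ W
  · exact Or.inl hdep
  push Not at hdep
  have hind : LinearIndependent k ![a, b] := LinearIndependent.pair_iff.mpr fun μ ν h => by
    by_contra hμν
    exact hdep μ ν (not_and_or.mp hμν) (h ▸ W.zero_mem)
  have hdisj : W ⊓ span k {a, b} = ⊥ := by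
    refine eq_bot_iff.mpr fun x ⟨hxW, hx⟩ => ?_
    obtain ⟨μ, ν, rfl⟩ := mem_span_pair.mp hx
    by_contra hne
    exact hdep μ ν (by contrapose! hne; simp [hne]) hxW
  have hpair : finrank k (span k {a, b}) = 2 := by
    rw [← Matrix.range_cons_cons_empty a b ![], finrank_span_eq_card hind, Fintype.card_fin]
  have hsup := finrank_sup_add_finrank_inf_eq W (span k {a, b})
  have hquot := (W ⊔ span k {a, b}).finrank_quotient_add_finrank
  rw [hdisj, finrank_bot] at hsup
  obtain ⟨c, hc⟩ := exists_sup_span_singleton_eq_top (W := W ⊔ span k {a, b}) (by omega)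
  refine Or.inr ⟨c, ?_⟩
  rwa [sup_assoc, ← span_union, Set.insert_union, Set.singleton_union] at hc

end LinearAlgebra

section Center

variable {k A : Type*} [Field k] [Ring A] [Algebra k A]

theorem mem_center_of_sup_span_eq_top {S : Set A}
    (hS : (Subalgebra.center k A).toSubmodule ⊔ span k S = ⊤) {g : A}
    (hg : ∀ x ∈ S, Commute g x) : g ∈ Subalgebra.center k A := by
  have hle : (Subalgebra.center k A).toSubmodule ⊔ span k S ≤
      (Subalgebra.centralizer k {g}).toSubmodule :=
    sup_le (Subalgebra.center_le_centralizer k _)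
      (span_le.mpr fun x hx h hh => by rw [Set.mem_singleton_iff.mp hh]; exact hg x hx)
  exact (Subalgebra.mem_center_iff (R := k)).mpr fun b => (hle (hS ▸ mem_top : b ∈ _) g rfl).symm

theorem mem_center_of_mul_mem_center {u a : A} (hu : IsUnit u) (huc : u ∈ Subalgebra.center k A)
    (hau : a * u ∈ Subalgebra.center k A) : a ∈ Subalgebra.center k A := by
  refine (Subalgebra.mem_center_iff (R := k)).mpr fun b => hu.mul_right_cancel ?_
  have hcu := (Subalgebra.mem_center_iff (R := k)).mp huc
  rw [mul_assoc, (Subalgebra.mem_center_iff (R := k)).mp hau b, mul_assoc, ← hcu, ← mul_assoc]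

variable {s : A →ₗ[k] k}

theorem eq_zero_of_forall_apply_mul_eq_zero (hs : ∀ x y : A, s (x * y) = s (y * x))
    (hnd : ∀ I : Ideal A, (∀ x ∈ I, s x = 0) → I = ⊥) {t : A} (ht : ∀ q, s (t * q) = 0) :
    t = 0 := by
  have hbot : Ideal.span {t} = ⊥ := hnd _ fun x hx => by
    obtain ⟨c, rfl⟩ := Ideal.mem_span_singleton'.mp hx
    rw [hs, ht]
  simpa [hbot] using Ideal.subset_span (Set.mem_singleton t)

theorem apply_commutator_mul_eq_zero (hs : ∀ x y : A, s (x * y) = s (y * x)) {x y : A}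
    (hxy : Commute x y) (c : A) : s ((x * c - c * x) * y) = 0 := by
  rw [sub_mul, map_sub, sub_eq_zero, mul_assoc c, hxy.eq, ← mul_assoc, hs (c * y) x, ← mul_assoc]

theorem commute_of_sup_span_eq_top (hs : ∀ x y : A, s (x * y) = s (y * x))
    (hnd : ∀ I : Ideal A, (∀ x ∈ I, s x = 0) → I = ⊥) {a b c : A} (hab : Commute a b)
    (htop : (Subalgebra.center k A).toSubmodule ⊔ span k {a, b, c} = ⊤) : Commute a c := by
  have hker : (Subalgebra.center k A).toSubmodule ⊔ span k {a, b, c} ≤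
      LinearMap.ker (s ∘ₗ LinearMap.mulLeft k (a * c - c * a)) := by
    refine sup_le (fun q hq => ?_) (span_le.mpr ?_)
    · exact apply_commutator_mul_eq_zero hs ((Subalgebra.mem_center_iff (R := k)).mp hq a) c
    · rintro q (rfl | rfl | rfl)
      · exact apply_commutator_mul_eq_zero hs (Commute.refl q) c
      · exact apply_commutator_mul_eq_zero hs hab c
      · show s ((a * q - q * a) * q) = 0
        rw [← neg_sub, neg_mul, map_neg, apply_commutator_mul_eq_zero hs (Commute.refl q) a,
          neg_zero]
  exact sub_eq_zero.mp <| eq_zero_of_forall_apply_mul_eq_zero hs hnd fun q =>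
    hker (htop ▸ mem_top : q ∈ _)

theorem center_eq_top_of_sup_span_eq_top (hs : ∀ x y : A, s (x * y) = s (y * x))
    (hnd : ∀ I : Ideal A, (∀ x ∈ I, s x = 0) → I = ⊥) {a b c : A} (hab : Commute a b)
    (htop : (Subalgebra.center k A).toSubmodule ⊔ span k {a, b, c} = ⊤) :
    Subalgebra.center k A = ⊤ := by
  have hac := commute_of_sup_span_eq_top hs hnd hab htop
  have hbc := commute_of_sup_span_eq_top hs hnd hab.symm (by rwa [Set.insert_comm])
  have hspan : span k {a, b, c} ≤ (Subalgebra.center k A).toSubmodule := by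
    refine span_le.mpr fun g hg => mem_center_of_sup_span_eq_top htop ?_
    rcases hg with rfl | rfl | rfl <;> rintro x (rfl | rfl | rfl)
    exacts [.refl _, hab, hac, hab.symm, .refl _, hbc, hac.symm, hbc.symm, .refl _]
  exact eq_top_iff.mpr fun x _ => sup_le le_rfl hspan (htop ▸ mem_top : x ∈ _)

variable [IsLocalRing A]

theorem isUnit_algebraMap_add_smul {μ : k} (hμ : μ ≠ 0) (ν : k) {z : A} (hz : ¬ IsUnit z) :
    IsUnit (algebraMap k A μ + ν • z) := by
  have hνz : ¬ IsUnit (-(ν • z)) := by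
    rw [IsUnit.neg_iff, Algebra.smul_def, (Algebra.commute_algebraMap_left ν z).isUnit_mul_iff]
    exact fun h => hz h.2
  have hμ' : IsUnit (algebraMap k A μ + ν • z + -(ν • z)) := by
    rw [add_neg_cancel_right]
    exact (IsUnit.mk0 μ hμ).map (algebraMap k A)
  exact (IsLocalRing.isUnit_or_isUnit_of_isUnit_add hμ').resolve_right hνz

theorem mul_mem_center_of_smul_add_smul_mul_mem_center {z : A}
    (hz : z ∈ Subalgebra.center k A) (hzu : ¬ IsUnit z) {a : A} {μ ν : k} (hμν : μ ≠ 0 ∨ ν ≠ 0)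
    (h : μ • a + ν • (a * z) ∈ Subalgebra.center k A) : a * z ∈ Subalgebra.center k A := by
  rcases eq_or_ne μ 0 with rfl | hμ
  · have hν : ν ≠ 0 := hμν.resolve_left (not_not.mpr rfl)
    rw [zero_smul, zero_add] at h
    simpa [smul_smul, inv_mul_cancel₀ hν] using Subalgebra.smul_mem _ h ν⁻¹
  · have hfactor : μ • a + ν • (a * z) = a * (algebraMap k A μ + ν • z) := by
      rw [mul_add, ← Algebra.commutes, ← Algebra.smul_def, mul_smul_comm]
    rw [hfactor] at h
    have hcen : algebraMap k A μ + ν • z ∈ Subalgebra.center k A :=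
      add_mem (Subalgebra.algebraMap_mem _ μ) (Subalgebra.smul_mem _ hz ν)
    exact mul_mem (mem_center_of_mul_mem_center (isUnit_algebraMap_add_smul hμ ν hzu) hcen h) hz

end Center

theorem mul_mem_center_of_finrank_le {k A : Type} [Field k] [Ring A] [Algebra k A]
    [FiniteDimensional k A] [IsLocalRing A] (hsym : IsSymmAlg k A)
    (hA : finrank k A ≤ finrank k (Subalgebra.center k A) + 3) {z : A}
    (hz : z ∈ Subalgebra.center k A) (hzu : ¬ IsUnit z) (a : A) :
    a * z ∈ Subalgebra.center k A := by
  obtain ⟨s, hs, hnd⟩ := hsym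
  rw [← Subalgebra.finrank_toSubmodule] at hA
  rcases exists_smul_add_smul_mem_or_exists_sup_span_eq_top hA a (a * z) with
    ⟨μ, ν, hμν, h⟩ | ⟨c, hc⟩
  · exact mul_mem_center_of_smul_add_smul_mul_mem_center hz hzu hμν h
  · have hcomm : Commute a (a * z) :=
      (Commute.refl a).mul_right ((Subalgebra.mem_center_iff (R := k)).mp hz a)
    rw [center_eq_top_of_sup_span_eq_top hs hnd hcomm hc]
    trivial

section Anticommuting

variable {R : Type*} [Ring R] {x y : R}

theorem commute_sq_of_mul_eq_neg (h : y * x = -(x * y)) : Commute y (x ^ 2) := by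
  show y * x ^ 2 = x ^ 2 * y
  rw [sq, ← mul_assoc, h, neg_mul, mul_assoc, h, mul_neg, neg_neg, mul_assoc]

theorem commute_sq_mul_of_mul_eq_neg (h : y * x = -(x * y)) (hx : x ^ 3 = 0) :
    Commute x (x ^ 2 * y) := by
  show x * (x ^ 2 * y) = x ^ 2 * y * x
  rw [mul_assoc, h, ← mul_assoc, ← pow_succ', mul_neg, ← mul_assoc, ← pow_succ, hx, zero_mul,
    neg_zero]

end Anticommuting

namespace Balg

variable (k : Type) [Field k]

theorem xB_pow_three : xB k ^ 3 = 0 := by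
  simpa [xB] using RingQuot.mkAlgHom_rel k (s := Brel k) ⟨rfl, Or.inl rfl⟩

theorem yB_pow_three : yB k ^ 3 = 0 := by
  simpa [yB] using RingQuot.mkAlgHom_rel k (s := Brel k) ⟨rfl, Or.inr (Or.inl rfl)⟩

theorem yB_mul_xB : yB k * xB k = -(xB k * yB k) := by
  refine eq_neg_of_add_eq_zero_right ?_
  simpa [xB, yB] using RingQuot.mkAlgHom_rel k (s := Brel k) ⟨rfl, Or.inr (Or.inr rfl)⟩

theorem adjoin_xB_yB : Algebra.adjoin k {xB k, yB k} = ⊤ := by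
  have hgen : {xB k, yB k} = RingQuot.mkAlgHom k (Brel k) '' Set.range (ι k) := by
    simp [Set.range, Fin.exists_fin_two, xB, yB, Set.image, Set.ext_iff, eq_comm]
  rw [hgen, Algebra.adjoin_image, FreeAlgebra.adjoin_range_ι, Algebra.map_top,
    AlgHom.range_eq_top]
  exact RingQuot.mkAlgHom_surjective k (Brel k)

theorem mem_center_of_commute {w : Balg k} (hx : Commute (xB k) w) (hy : Commute (yB k) w) :
    w ∈ Subalgebra.center k (Balg k) :=
  (Subalgebra.mem_center_iff (R := k)).mpr fun b =>
    (Algebra.commute_of_mem_adjoin_of_forall_mem_commute (adjoin_xB_yB k ▸ Algebra.mem_top)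
      (by rintro _ (rfl | rfl); exacts [hx.symm, hy.symm]) : Commute w b).eq.symm

/- `Pi.single (i, j) 1` stands for the monomial `xⁱ yʲ` (`i, j ≤ 2`), on which `x` and `y` act by
left multiplication: `y * xⁱ yʲ = (-1)ⁱ xⁱ yʲ⁺¹`. -/
def shiftX : Module.End k (ℕ × ℕ → k) :=
  LinearMap.pi fun p => if p.1 = 0 ∨ 2 < p.1 then 0 else LinearMap.proj (p.1 - 1, p.2)

def shiftY : Module.End k (ℕ × ℕ → k) :=
  LinearMap.pi fun p =>
    if p.2 = 0 ∨ 2 < p.2 then 0 else (-1 : k) ^ p.1 • LinearMap.proj (p.1, p.2 - 1)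

@[simp] theorem shiftX_apply (f : ℕ × ℕ → k) (i j : ℕ) :
    shiftX k f (i, j) = if i = 0 ∨ 2 < i then 0 else f (i - 1, j) := by
  simp only [shiftX, LinearMap.pi_apply]
  split_ifs <;> rfl

@[simp] theorem shiftY_apply (f : ℕ × ℕ → k) (i j : ℕ) :
    shiftY k f (i, j) = if j = 0 ∨ 2 < j then 0 else (-1 : k) ^ i * f (i, j - 1) := by
  simp only [shiftY, LinearMap.pi_apply]
  split_ifs <;> rfl

theorem shiftX_pow_three : shiftX k ^ 3 = 0 := by
  ext f ⟨i, j⟩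
  simp only [pow_succ, pow_zero, one_mul, Module.End.mul_apply, shiftX_apply,
    LinearMap.zero_apply, Pi.zero_apply]
  rcases i with _ | _ | _ | i <;> simp

theorem shiftY_pow_three : shiftY k ^ 3 = 0 := by
  ext f ⟨i, j⟩
  simp only [pow_succ, pow_zero, one_mul, Module.End.mul_apply, shiftY_apply,
    LinearMap.zero_apply, Pi.zero_apply]
  rcases j with _ | _ | _ | j <;> simp

theorem shiftX_mul_shiftY_add : shiftX k * shiftY k + shiftY k * shiftX k = 0 := by
  ext f ⟨i, j⟩
  simp only [LinearMap.add_apply, Module.End.mul_apply, shiftX_apply, shiftY_apply,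
    LinearMap.zero_apply, Pi.add_apply, Pi.zero_apply]
  rcases i with _ | i
  · simp
  · split_ifs <;> simp [pow_succ]

def rep : Balg k →ₐ[k] Module.End k (ℕ × ℕ → k) :=
  RingQuot.liftAlgHom k ⟨FreeAlgebra.lift k ![shiftX k, shiftY k], by
    rintro _ _ ⟨rfl, rfl | rfl | rfl⟩ <;>
      simp [shiftX_pow_three, shiftY_pow_three, shiftX_mul_shiftY_add]⟩

@[simp] theorem rep_xB : rep k (xB k) = shiftX k := by
  simp [rep, xB, RingQuot.liftAlgHom_mkAlgHom_apply]

@[simp] theorem rep_yB : rep k (yB k) = shiftY k := by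
  simp [rep, yB, RingQuot.liftAlgHom_mkAlgHom_apply]

theorem shiftX_single {i : ℕ} (hi : i < 2) (j : ℕ) :
    shiftX k (Pi.single (i, j) 1) = Pi.single (i + 1, j) 1 := by
  ext ⟨p, q⟩
  simp only [shiftX_apply, Pi.single_apply, Prod.mk.injEq]
  split_ifs <;> first | rfl | omega

theorem shiftY_single {j : ℕ} (hj : j < 2) :
    shiftY k (Pi.single (0, j) 1) = Pi.single (0, j + 1) 1 := by
  ext ⟨p, q⟩
  simp only [shiftY_apply, Pi.single_apply, Prod.mk.injEq]
  split_ifs <;> first | rfl | omega | simp_all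

theorem rep_monomial_single {i j : ℕ} (hi : i ≤ 2) (hj : j ≤ 2) :
    rep k (xB k ^ i * yB k ^ j) (Pi.single (0, 0) 1) = Pi.single (i, j) 1 := by
  have hY : ∀ m ≤ 2, (shiftY k ^ m) (Pi.single (0, 0) 1) = Pi.single (0, m) 1 := by
    intro m hm
    induction m with
    | zero => rfl
    | succ m ih => rw [pow_succ', Module.End.mul_apply, ih (by omega), shiftY_single k (by omega)]
  have hX : ∀ m ≤ 2, (shiftX k ^ m) (Pi.single (0, j) 1) = Pi.single (m, j) 1 := by
    intro m hm
    induction m with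
    | zero => rfl
    | succ m ih => rw [pow_succ', Module.End.mul_apply, ih (by omega), shiftX_single k (by omega)]
  rw [map_mul, map_pow, map_pow, rep_xB, rep_yB, Module.End.mul_apply, hY j hj, hX i hi]

def centralExponents : Fin 6 → ℕ × ℕ := ![(0, 0), (2, 0), (0, 2), (2, 1), (1, 2), (2, 2)]

def centralMonomial (n : Fin 6) : Balg k :=
  xB k ^ (centralExponents n).1 * yB k ^ (centralExponents n).2

theorem centralMonomial_mem_center (n : Fin 6) :
    centralMonomial k n ∈ Subalgebra.center k (Balg k) := by
  have hyx := yB_mul_xB k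
  have hxy : xB k * yB k = -(yB k * xB k) := by rw [hyx, neg_neg]
  have hx2 : Commute (xB k) (yB k ^ 2) := commute_sq_of_mul_eq_neg hxy
  have hy2 : Commute (yB k) (xB k ^ 2) := commute_sq_of_mul_eq_neg hyx
  fin_cases n <;> refine mem_center_of_commute k ?_ ?_ <;>
    simp only [centralMonomial, centralExponents, Fin.zero_eta, Fin.mk_one, Fin.reduceFinMk,
      Fin.isValue, Matrix.cons_val_zero, Matrix.cons_val_one, Matrix.cons_val, pow_zero, pow_one,
      mul_one, one_mul, Commute.one_right, Commute.refl, Commute.pow_right]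
  exacts [hy2, hx2, commute_sq_mul_of_mul_eq_neg hyx (xB_pow_three k), hy2.mul_right (.refl _),
    (Commute.refl _).mul_right hx2, hx2.eq ▸ commute_sq_mul_of_mul_eq_neg hxy (yB_pow_three k),
    (Commute.self_pow _ 2).mul_right hx2, hy2.mul_right (.self_pow _ 2)]

theorem linearIndependent_centralMonomial : LinearIndependent k (centralMonomial k) := by
  let ev : Balg k →ₗ[k] (ℕ × ℕ → k) := LinearMap.applyₗ (Pi.single (0, 0) 1) ∘ₗ (rep k).toLinearMap
  refine LinearIndependent.of_comp ev ?_
  have hev : ∀ n, ev (centralMonomial k n) = Pi.single (centralExponents n) 1 := by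
    intro n
    fin_cases n <;> exact rep_monomial_single k (by decide) (by decide)
  have hinj : Function.Injective centralExponents := by decide
  simpa [Function.comp_def, hev] using (Pi.linearIndependent_single_one (ℕ × ℕ) k).comp _ hinj

end Balg

theorem six_le_finrank_center {k A : Type} [Field k] [Ring A] [Algebra k A]
    [FiniteDimensional k A] (e : Subalgebra.center k A ≃ₐ[k] Subalgebra.center k (Balg k)) :
    6 ≤ finrank k (Subalgebra.center k A) := by
  have hli : LinearIndependent k fun n =>
      e.symm ⟨Balg.centralMonomial k n, Balg.centralMonomial_mem_center k n⟩ :=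
    .of_comp ((Subalgebra.center k (Balg k)).val.toLinearMap ∘ₗ e.toLinearMap) <| by
      simpa [Function.comp_def] using Balg.linearIndependent_centralMonomial k
  simpa using hli.fintype_card_le_finrank

theorem stmt14_general (k : Type) [Field k]
    (A : Type) [Ring A] [Algebra k A] [FiniteDimensional k A]
    [IsLocalRing A] (hsym : IsSymmAlg k A) (hdim : finrank k A = 9)
    (hcen : Nonempty (Subalgebra.center k A ≃ₐ[k] Subalgebra.center k (Balg k))) :
    ∀ a : A, ∀ z ∈ Subalgebra.center k A, ¬ IsUnit z →
      (a * z ∈ Subalgebra.center k A ∧ ¬ IsUnit (a * z) ∧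
       z * a ∈ Subalgebra.center k A ∧ ¬ IsUnit (z * a)) := by
  intro a z hz hzu
  have hZ := six_le_finrank_center hcen.some
  have haz : a * z ∈ Subalgebra.center k A :=
    mul_mem_center_of_finrank_le hsym (by omega) hz hzu a
  have hza : Commute z a := ((Subalgebra.mem_center_iff (R := k)).mp hz a).symm
  have hunit : ¬ IsUnit (a * z) := fun h => hzu (hza.symm.isUnit_mul_iff.mp h).2
  rw [hza.eq]
  exact ⟨haz, hunit, haz, hunit⟩

/-- Z₁ = Z(A) ∩ J(A) is a two-sided ideal of A. -/
theorem stmt14 (k : Type) [Field k] [CharP k 3] [IsAlgClosed k]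
    (A : Type) [Ring A] [Algebra k A] [FiniteDimensional k A]
    [IsLocalRing A] (hsym : IsSymmAlg k A) (hdim : finrank k A = 9)
    (hcen : Nonempty (Subalgebra.center k A ≃ₐ[k] Subalgebra.center k (Balg k))) :
    ∀ a : A, ∀ z ∈ Subalgebra.center k A, ¬ IsUnit z →
      (a * z ∈ Subalgebra.center k A ∧ ¬ IsUnit (a * z) ∧
       z * a ∈ Subalgebra.center k A ∧ ¬ IsUnit (z * a)) :=
  stmt14_general k A hsym hdim hcen
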